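/- arXiv:1004.1724 — 2 statements merged into one kernel-verified Lean document; each statement's English description precedes it below -/
import Mathlib

section
/- If w, w' ∈ S(n,r) and w covers w' in the order of S(n,r), then w^c covers (w')^c; in particular, the complementation map w ↦ w^c sends covering pairs to reversed covering pairs. -/
open Finset

/-- The alphabet `A(n,r)` is encoded as the integer interval `[-(n-r), r]`:
the barred symbol `k̄` is `-k`, the tilded symbol `k̃` is `k`, and `0` is `0`.
A string of `S(n,r)` is a function `w : Fin n → ℤ` satisfying: the first `r`
entries lie in `[0,r]`, the last `n-r` entries lie in `[-(n-r),0]`, the whole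
string is weakly decreasing, the nonzero entries of the positive part are
strictly decreasing, and the nonzero entries of the negative part are strictly
decreasing. -/
def Admissible (n r : ℕ) (w : Fin n → ℤ) : Prop :=
  (∀ i : Fin n, (i : ℕ) < r → 0 ≤ w i ∧ w i ≤ (r : ℤ)) ∧
  (∀ i : Fin n, r ≤ (i : ℕ) → -((n - r : ℕ) : ℤ) ≤ w i ∧ w i ≤ 0) ∧
  (∀ i j : Fin n, i ≤ j → w j ≤ w i) ∧
  (∀ i j : Fin n, i < j → (j : ℕ) < r → w j ≠ 0 → w j < w i) ∧
  (∀ i j : Fin n, i < j → r ≤ (i : ℕ) → w i ≠ 0 → w j < w i)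

/-- The componentwise (product) order on strings. -/
def sle {n : ℕ} (w w' : Fin n → ℤ) : Prop := ∀ i, w i ≤ w' i

/-- Strict componentwise order. -/
def slt {n : ℕ} (w w' : Fin n → ℤ) : Prop := sle w w' ∧ w ≠ w'

/-- `w'` covers `w` in the poset `S(n,r)`. -/
def SCovers (n r : ℕ) (w w' : Fin n → ℤ) : Prop :=
  slt w w' ∧ ¬ ∃ u : Fin n → ℤ, Admissible n r u ∧ slt w u ∧ slt u w'

/-- The rank function `ρ` of `S(n,r)`:
`ρ(i_1⋯i_r|j_1⋯j_{n-r}) = Σ i_k + Σ (k - j_k)` (symbols read as integers). -/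
def rho (n r : ℕ) (w : Fin n → ℤ) : ℤ :=
  ∑ i : Fin n, (if (i : ℕ) < r then w i else ((((i : ℕ) - r : ℕ) : ℤ) + 1 + w i))

/-- `wc` is the complement of `w` in `S(n,r)`: the nonzero symbols of `wc`
are exactly the elements of `A(n,r) ∖ {0}` that are not symbols of `w`. -/
def ComplOf (n r : ℕ) (w wc : Fin n → ℤ) : Prop :=
  ∀ a : ℤ, a ≠ 0 →
    ((∃ i, wc i = a) ↔ (-((n - r : ℕ) : ℤ) ≤ a ∧ a ≤ (r : ℤ) ∧ ¬ ∃ i, w i = a))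

/-- The top rank `R(n,r) = C(r+1,2) + C(n-r+1,2)`. -/
def Rnk (n r : ℕ) : ℕ := r * (r + 1) / 2 + (n - r) * (n - r + 1) / 2

/-- `s(n,r,k)`: the number of elements of `S(n,r)` of rank `k`. -/
noncomputable def sCount (n r k : ℕ) : ℕ :=
  {w : Fin n → ℤ | Admissible n r w ∧ rho n r w = (k : ℤ)}.ncard

/-- The minimum `0⋯0|12⋯(n-r)` of `S(n,r)`. -/
def botStr (n r : ℕ) : Fin n → ℤ :=
  fun i => if (i : ℕ) < r then 0 else -((((i : ℕ) - r : ℕ) : ℤ) + 1)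

/-- The maximum `r(r-1)⋯1|0⋯0` of `S(n,r)`. -/
def topStr (n r : ℕ) : Fin n → ℤ :=
  fun i => if (i : ℕ) < r then (r : ℤ) - ((i : ℕ) : ℤ) else 0

/-- The string `r(r-1)⋯1|12⋯(n-r)` containing every nonzero symbol. -/
def fullStr (n r : ℕ) : Fin n → ℤ :=
  fun i => if (i : ℕ) < r then (r : ℤ) - ((i : ℕ) : ℤ)
           else -((((i : ℕ) - r : ℕ) : ℤ) + 1)

/-- An `(n,r)`-function: increasing on the alphabet, zero at `0`,
and strictly negative on the barred symbols. -/
def IsNRFun (n r : ℕ) (f : ℤ → ℝ) : Prop :=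
  f 0 = 0 ∧
  (∀ a b : ℤ, -((n - r : ℕ) : ℤ) ≤ a → a ≤ b → b ≤ (r : ℤ) → f a ≤ f b) ∧
  (∀ a : ℤ, -((n - r : ℕ) : ℤ) ≤ a → a < 0 → f a < 0)

/-- The total sum of `f` over the alphabet `A(n,r)` is nonnegative
(the defining condition of an `(n,r)`-weight function, since `f 0 = 0`). -/
def TotalNN (n r : ℕ) (f : ℤ → ℝ) : Prop :=
  0 ≤ ∑ a ∈ Finset.Icc (-((n - r : ℕ) : ℤ)) (r : ℤ), f a

/-- The sum function `Σ_f` induced by `f` on strings. -/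
def Sf (n : ℕ) (f : ℤ → ℝ) (w : Fin n → ℤ) : ℝ := ∑ i : Fin n, f (w i)

/-!
Every admissible string is determined by its symbols: its positive symbols sit in decreasing
order at the front of the positive part and its negative symbols in decreasing order at the back
of the negative part. Hence the number of entries `≥ y` of a string is a count of symbols in an
interval of the alphabet, and for a complementary pair these counts add up to a quantity
depending only on `y`. Since a weakly decreasing string is bounded by another one as soon as
all these counts are, complementation reverses the order. Listing the missing symbols in the
same way shows that every string has a complement, so `w ↦ w^c` is an order-reversing
involution of `S(n,r)`, which exchanges covering pairs.
-/

theorem Antitone.le_of_forall_card_le {ι α : Type*} [Fintype ι] [LinearOrder ι] [LinearOrder α]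
    {f g : ι → α} (hf : Antitone f) (hg : Antitone g)
    (h : ∀ y, #{i | y ≤ f i} ≤ #{i | y ≤ g i}) : f ≤ g := by
  intro i
  by_contra! hgi
  have hsub : ({j | f i ≤ g j} : Finset ι) ⊂ ({j | f i ≤ f j} : Finset ι) := by
    refine (ssubset_iff_of_subset fun j hj => ?_).2 ⟨i, by simp, by simpa using hgi⟩
    simp only [mem_filter, mem_univ, true_and] at hj ⊢
    have hji : j < i := lt_of_not_ge fun hij => (hg hij).trans_lt hgi |>.not_ge hj
    exact hf hji.le
  exact (h (f i)).not_gt (card_lt_card hsub)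

namespace List

variable {α : Type*} {l : List α} {k k₁ k₂ : ℕ} {d : α}

theorem lt_length_of_getD_ne (h : l.getD k d ≠ d) : k < l.length :=
  lt_of_not_ge fun hk => h (l.getD_eq_default d hk)

theorem getD_mem_of_ne (h : l.getD k d ≠ d) : l.getD k d ∈ l := by
  rw [l.getD_eq_getElem d (lt_length_of_getD_ne h)]
  exact getElem_mem _

theorem getD_mem_of_forall_mem {S : Set α} (hl : ∀ x ∈ l, x ∈ S) (hd : d ∈ S) :
    l.getD k d ∈ S := by
  by_cases h : l.getD k d = d
  · rwa [h]
  · exact hl _ (getD_mem_of_ne h)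

theorem exists_getD_eq_of_mem {a : α} (ha : a ∈ l) : ∃ k < l.length, l.getD k d = a := by
  obtain ⟨k, hk, rfl⟩ := mem_iff_getElem.1 ha
  exact ⟨k, hk, l.getD_eq_getElem d hk⟩

theorem SortedGT.getD_lt_getD_of_lt [Preorder α] (hl : l.SortedGT) (hk : k₁ < k₂)
    (h : l.getD k₂ d ≠ d) : l.getD k₂ d < l.getD k₁ d := by
  have hk₂ := lt_length_of_getD_ne h
  rw [l.getD_eq_getElem d hk₂, l.getD_eq_getElem d (hk.trans hk₂)]
  exact hl.getElem_gt_getElem_of_lt hk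

theorem SortedGT.getD_le_getD_of_le [PartialOrder α] (hl : l.SortedGT) (hd : ∀ x ∈ l, d ≤ x)
    (hk : k₁ ≤ k₂) : l.getD k₂ d ≤ l.getD k₁ d := by
  by_cases h : l.getD k₂ d = d
  · rw [h]
    exact getD_mem_of_forall_mem (S := Set.Ici d) hd le_rfl
  · rcases hk.eq_or_lt with rfl | hlt
    · exact le_rfl
    · exact (hl.getD_lt_getD_of_lt hlt h).le

end List

variable {n r : ℕ} {u v w w' uc vc wc c c₁ c₂ : Fin n → ℤ}

namespace Admissible

theorem antitone (hw : Admissible n r w) : Antitone w := fun i j hij => hw.2.2.1 i j hij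

theorem mem_Icc (hw : Admissible n r w) (i : Fin n) :
    w i ∈ Icc (-((n - r : ℕ) : ℤ)) r := by
  rw [Finset.mem_Icc]
  rcases lt_or_ge (i : ℕ) r with hi | hi
  · have := hw.1 i hi
    omega
  · have := hw.2.1 i hi
    omega

theorem injOn_ne_zero (hw : Admissible n r w) : Set.InjOn w {i | w i ≠ 0} := by
  have key : ∀ i j, i < j → w j ≠ 0 → w j ≠ w i := by
    intro i j hij hj
    rcases lt_or_ge (j : ℕ) r with hjr | hjr
    · exact (hw.2.2.2.1 i j hij hjr hj).ne
    rcases lt_or_ge (i : ℕ) r with hir | hir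
    · have := (hw.1 i hir).1
      have := (hw.2.1 j hjr).2
      omega
    · intro heq
      exact (hw.2.2.2.2 i j hij hir (heq ▸ hj)).ne heq
  intro i hi j hj hij
  by_contra hne
  rcases lt_or_gt_of_ne hne with h | h
  · exact key i j h hj hij.symm
  · exact key j i h hi hij

theorem card_filter_mem {A : Finset ℤ} (hw : Admissible n r w) (hA : 0 ∉ A) :
    #{i | w i ∈ A} = #{a ∈ A | ∃ i, w i = a} := by
  rw [← card_image_of_injOn (f := w)]
  · congr 1
    ext a
    simp only [mem_image, mem_filter, mem_univ, true_and]
    constructor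
    · rintro ⟨i, hi, rfl⟩
      exact ⟨hi, i, rfl⟩
    · rintro ⟨ha, i, rfl⟩
      exact ⟨i, ha, rfl⟩
  · refine hw.injOn_ne_zero.mono fun i hi => ?_
    simp only [coe_filter, mem_univ, true_and, Set.mem_ofPred_eq] at hi ⊢
    exact ne_of_mem_of_not_mem hi hA

theorem card_le_apply_eq_card_mem_Icc (hw : Admissible n r w) (y : ℤ) :
    #{i | y ≤ w i} = #{i | w i ∈ Icc y r} := by
  congr 1
  ext i
  simp only [mem_filter, mem_univ, true_and, Finset.mem_Icc, iff_self_and]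
  exact fun _ => (Finset.mem_Icc.1 (hw.mem_Icc i)).2

theorem card_le_apply_add_card_mem_Icc (hw : Admissible n r w) (y : ℤ) :
    #{i | y ≤ w i} + #{i | w i ∈ Icc (-((n - r : ℕ) : ℤ)) (y - 1)} = n := by
  have hcongr : ({i | w i ∈ Icc (-((n - r : ℕ) : ℤ)) (y - 1)} : Finset (Fin n)) =
      ({i | ¬ y ≤ w i} : Finset (Fin n)) := by
    ext i
    have := Finset.mem_Icc.1 (hw.mem_Icc i)
    simp only [mem_filter, mem_univ, true_and, Finset.mem_Icc]
    omega
  rw [hcongr, card_filter_add_card_filter_not, card_univ, Fintype.card_fin]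

end Admissible

namespace ComplOf

theorem symm (hw : Admissible n r w) (h : ComplOf n r w wc) : ComplOf n r wc w := by
  intro a ha
  constructor
  · rintro ⟨i, rfl⟩
    have := Finset.mem_Icc.1 (hw.mem_Icc i)
    exact ⟨this.1, this.2, fun hc => ((h _ ha).1 hc).2.2 ⟨i, rfl⟩⟩
  · rintro ⟨hlo, hhi, hwc⟩
    by_contra hw'
    exact hwc ((h a ha).2 ⟨hlo, hhi, hw'⟩)

theorem card_filter_mem_add (hw : Admissible n r w) (hwc : Admissible n r wc)
    (h : ComplOf n r w wc) {A : Finset ℤ} (hA : A ⊆ Icc (-((n - r : ℕ) : ℤ)) r) (h0 : 0 ∉ A) :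
    #{i | w i ∈ A} + #{i | wc i ∈ A} = #A := by
  have hcongr : {a ∈ A | ∃ i, wc i = a} = {a ∈ A | ¬ ∃ i, w i = a} := by
    refine filter_congr fun a ha => ?_
    have := Finset.mem_Icc.1 (hA ha)
    rw [h a (ne_of_mem_of_not_mem ha h0)]
    exact ⟨fun h' => h'.2.2, fun h' => ⟨this.1, this.2, h'⟩⟩
  rw [hw.card_filter_mem h0, hwc.card_filter_mem h0, hcongr, card_filter_add_card_filter_not]

theorem sle_of_sle (hu : Admissible n r u) (hv : Admissible n r v)
    (huc : Admissible n r uc) (hvc : Admissible n r vc)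
    (hcu : ComplOf n r u uc) (hcv : ComplOf n r v vc) (h : sle u v) : sle vc uc := by
  refine hvc.antitone.le_of_forall_card_le huc.antitone fun y => ?_
  have hmono : #{i | y ≤ u i} ≤ #{i | y ≤ v i} :=
    card_le_card fun i => by
      simp only [mem_filter, mem_univ, true_and]
      exact fun hi => hi.trans (h i)
  rcases lt_or_ge 0 y with hy | hy
  · have hA : Icc y r ⊆ Icc (-((n - r : ℕ) : ℤ)) r := Icc_subset_Icc (by omega) le_rfl
    have h0 : (0 : ℤ) ∉ Icc y r := by rw [Finset.mem_Icc]; omega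
    have := hcu.card_filter_mem_add hu huc hA h0
    have := hcv.card_filter_mem_add hv hvc hA h0
    rw [hu.card_le_apply_eq_card_mem_Icc, hv.card_le_apply_eq_card_mem_Icc] at hmono
    rw [huc.card_le_apply_eq_card_mem_Icc, hvc.card_le_apply_eq_card_mem_Icc]
    omega
  · have hB : Icc (-((n - r : ℕ) : ℤ)) (y - 1) ⊆ Icc (-((n - r : ℕ) : ℤ)) r :=
      Icc_subset_Icc le_rfl (by omega)
    have h0 : (0 : ℤ) ∉ Icc (-((n - r : ℕ) : ℤ)) (y - 1) := by rw [Finset.mem_Icc]; omega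
    have := hcu.card_filter_mem_add hu huc hB h0
    have := hcv.card_filter_mem_add hv hvc hB h0
    have := hu.card_le_apply_add_card_mem_Icc y
    have := hv.card_le_apply_add_card_mem_Icc y
    have := huc.card_le_apply_add_card_mem_Icc y
    have := hvc.card_le_apply_add_card_mem_Icc y
    omega

theorem unique (hw : Admissible n r w) (hc₁ : Admissible n r c₁) (hc₂ : Admissible n r c₂)
    (h₁ : ComplOf n r w c₁) (h₂ : ComplOf n r w c₂) : c₁ = c₂ :=
  funext fun i => le_antisymm (h₂.sle_of_sle hw hw hc₂ hc₁ h₁ (fun _ => le_rfl) i)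
    (h₁.sle_of_sle hw hw hc₁ hc₂ h₂ (fun _ => le_rfl) i)

theorem inj (hw : Admissible n r w) (hw' : Admissible n r w') (hc : Admissible n r c)
    (h : ComplOf n r w c) (h' : ComplOf n r w' c) : w = w' :=
  (h.symm hw).unique hc hw hw' (h'.symm hw')

end ComplOf

/-- The string whose positive symbols are `P` and whose negative symbols are `-N`. -/
noncomputable def ofSymbols (n r : ℕ) (P N : Finset ℤ) : Fin n → ℤ := fun i =>
  if (i : ℕ) < r then (P.sort (· ≥ ·)).getD i 0 else -(N.sort (· ≥ ·)).getD (n - 1 - i) 0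

section ofSymbols

variable {P N : Finset ℤ} {i : Fin n}

theorem ofSymbols_of_lt (hi : (i : ℕ) < r) :
    ofSymbols n r P N i = (P.sort (· ≥ ·)).getD i 0 := if_pos hi

theorem ofSymbols_of_ge (hi : r ≤ (i : ℕ)) :
    ofSymbols n r P N i = -(N.sort (· ≥ ·)).getD (n - 1 - i) 0 := if_neg (not_lt.2 hi)

theorem getD_sort_mem_Icc {m : ℤ} (hm : 0 ≤ m) (hP : P ⊆ Icc 1 m) (k : ℕ) :
    (P.sort (· ≥ ·)).getD k 0 ∈ Icc 0 m :=
  List.getD_mem_of_forall_mem (S := ↑(Icc 0 m))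
    (fun x hx => Icc_subset_Icc zero_le_one le_rfl (hP ((mem_sort _).1 hx))) (by simp [hm])

theorem admissible_ofSymbols (hP : P ⊆ Icc 1 r) (hN : N ⊆ Icc 1 (n - r : ℕ)) :
    Admissible n r (ofSymbols n r P N) := by
  have hPb k := Finset.mem_Icc.1 (getD_sort_mem_Icc (Nat.cast_nonneg r) hP k)
  have hNb k := Finset.mem_Icc.1 (getD_sort_mem_Icc (Nat.cast_nonneg (n - r)) hN k)
  have hP0 : ∀ x ∈ P.sort (· ≥ ·), 0 ≤ x := fun x hx =>
    zero_le_one.trans (Finset.mem_Icc.1 (hP ((mem_sort _).1 hx))).1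
  have hN0 : ∀ x ∈ N.sort (· ≥ ·), 0 ≤ x := fun x hx =>
    zero_le_one.trans (Finset.mem_Icc.1 (hN ((mem_sort _).1 hx))).1
  refine ⟨fun i hi => ?_, fun i hi => ?_, fun i j hij => ?_, fun i j hij hj hne => ?_,
    fun i j hij hi hne => ?_⟩
  · rw [ofSymbols_of_lt hi]
    exact hPb i
  · have := hNb (n - 1 - i)
    rw [ofSymbols_of_ge hi]
    omega
  · have hij' : (i : ℕ) ≤ j := hij
    rcases lt_or_ge (j : ℕ) r with hj | hj
    · rw [ofSymbols_of_lt hj, ofSymbols_of_lt (hij'.trans_lt hj)]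
      exact (sortedGT_sort P).getD_le_getD_of_le hP0 hij'
    rcases lt_or_ge (i : ℕ) r with hi | hi
    · have := hPb i
      have := hNb (n - 1 - j)
      rw [ofSymbols_of_lt hi, ofSymbols_of_ge hj]
      omega
    · have := (sortedGT_sort N).getD_le_getD_of_le hN0 (Nat.sub_le_sub_left hij' (n - 1))
      rw [ofSymbols_of_ge hi, ofSymbols_of_ge hj]
      omega
  · rw [ofSymbols_of_lt hj] at hne ⊢
    rw [ofSymbols_of_lt (lt_trans hij hj)]
    exact (sortedGT_sort P).getD_lt_getD_of_lt hij hne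
  · have hj : r ≤ (j : ℕ) := hi.trans (le_of_lt hij)
    have hlt : n - 1 - (j : ℕ) < n - 1 - i := by have := j.isLt; have : (i : ℕ) < j := hij; omega
    rw [ofSymbols_of_ge hi] at hne
    have := (sortedGT_sort N).getD_lt_getD_of_lt hlt (neg_ne_zero.1 hne)
    rw [ofSymbols_of_ge hi, ofSymbols_of_ge hj]
    omega

theorem exists_ofSymbols_eq_iff (hr : r ≤ n) (hP : P ⊆ Icc 1 r) (hN : N ⊆ Icc 1 (n - r : ℕ))
    {a : ℤ} (ha : a ≠ 0) : (∃ i, ofSymbols n r P N i = a) ↔ a ∈ P ∨ -a ∈ N := by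
  constructor
  · rintro ⟨i, rfl⟩
    rcases lt_or_ge (i : ℕ) r with hi | hi
    · rw [ofSymbols_of_lt hi] at ha ⊢
      exact .inl ((mem_sort _).1 (List.getD_mem_of_ne ha))
    · rw [ofSymbols_of_ge hi, neg_ne_zero] at ha
      rw [ofSymbols_of_ge hi, neg_neg]
      exact .inr ((mem_sort _).1 (List.getD_mem_of_ne ha))
  · rintro (ha | ha)
    · obtain ⟨k, hk, hka⟩ := List.exists_getD_eq_of_mem (d := 0) ((mem_sort (· ≥ ·)).2 ha)
      have hkr : k < r := by
        have := card_le_card hP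
        simp only [length_sort, Int.card_Icc] at hk this
        omega
      exact ⟨⟨k, by omega⟩, by rw [ofSymbols_of_lt hkr, hka]⟩
    · obtain ⟨k, hk, hka⟩ := List.exists_getD_eq_of_mem (d := 0) ((mem_sort (· ≥ ·)).2 ha)
      have hkr : k < n - r := by
        have := card_le_card hN
        simp only [length_sort, Int.card_Icc] at hk this
        omega
      refine ⟨⟨n - 1 - k, by omega⟩, ?_⟩
      rw [ofSymbols_of_ge (show r ≤ n - 1 - k by omega), show n - 1 - (n - 1 - k) = k by omega,
        hka, neg_neg]

end ofSymbols

theorem exists_complOf (hr : r ≤ n) (u : Fin n → ℤ) :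
    ∃ uc, Admissible n r uc ∧ ComplOf n r u uc := by
  have hP : {a ∈ Icc 1 (r : ℤ) | ¬ ∃ i, u i = a} ⊆ Icc 1 (r : ℤ) := filter_subset _ _
  have hN : {a ∈ Icc 1 ((n - r : ℕ) : ℤ) | ¬ ∃ i, u i = -a} ⊆ Icc 1 ((n - r : ℕ) : ℤ) :=
    filter_subset _ _
  refine ⟨_, admissible_ofSymbols hP hN, fun a ha => ?_⟩
  rw [exists_ofSymbols_eq_iff hr hP hN ha]
  by_cases hu : ∃ i, u i = a
  · simp [hu]
  · simp only [not_exists] at hu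
    simp only [not_exists, mem_filter, Finset.mem_Icc, hu, not_false_eq_true, implies_true,
      and_true, neg_neg, exists_false]
    omega

/-- complementation sends covering pairs to reversed covering
pairs: if `w` covers `w'` in `S(n,r)` then `w^c` covers `(w')^c`. -/
theorem Snr_compl_covers (n r : ℕ) (hr : r ≤ n) (w w' wc wc' : Fin n → ℤ)
    (hw : Admissible n r w) (hw' : Admissible n r w')
    (hwc : Admissible n r wc) (hwc' : Admissible n r wc')
    (hcw : ComplOf n r w wc) (hcw' : ComplOf n r w' wc')
    (hcov : SCovers n r w' w) :
    SCovers n r wc wc' := by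
  obtain ⟨⟨hle, hne⟩, hnomid⟩ := hcov
  have hwcw := hcw.symm hw
  have hwcw' := hcw'.symm hw'
  refine ⟨⟨hcw'.sle_of_sle hw' hw hwc' hwc hcw hle, fun h => hne ?_⟩, ?_⟩
  · exact hwcw'.unique hwc' hw' hw (h ▸ hwcw)
  rintro ⟨u, hu, ⟨hwcu, hwcu_ne⟩, ⟨huwc', huwc'_ne⟩⟩
  obtain ⟨uc, huc, hcu⟩ := exists_complOf hr u
  refine hnomid ⟨uc, huc, ⟨hcu.sle_of_sle hu hwc' huc hw' hwcw' huwc', fun h => ?_⟩,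
    ⟨hwcw.sle_of_sle hwc hu hw huc hcu hwcu, fun h => ?_⟩⟩
  · exact huwc'_ne (hcu.inj hu hwc' huc (h ▸ hwcw'))
  · exact hwcu_ne (hwcw.inj hwc hu hw (h ▸ hcu))
end

section
/- Let s(n,r,k) denote the number of elements of S(n,r) of rank k. For n ≥ 1 and 0 ≤ r < n: s(n,r,k) = s(n−1,r,k) if 0 ≤ k < n−r; s(n,r,k) = s(n−1,r,k) + s(n−1,r,k−(n−r)) if n−r ≤ k ≤ R(n−1,r); and s(n,r,k) = s(n−1,r,k−(n−r)) if R(n−1,r) < k ≤ R(n,r). Moreover s(n,n,k) = s(n,0,k). -/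
open Finset

/-!
A string of `S(n+1,r)` either ends with the smallest barred symbol, which can be dropped without
changing the rank, or its negative part starts with `0` (otherwise its `n+1-r` entries would be
distinct barred symbols, the last one the smallest), and deleting that `0` lowers the rank by
`n+1-r`. Hence `s(n+1,r,κ) = s(n,r,κ) + s(n,r,κ-(n+1-r))`.

Reversing a string and negating its entries maps `S(n,r)` onto `S(n,n-r)` and turns the rank `ρ`
into `R(n,r) - ρ`. This bounds all ranks by `R(n,r)`, and it reduces `s(n,n,k) = s(n,0,k)` to the
symmetry `s(n,0,k) = s(n,0,R(n,0)-k)`, which follows from the recursion by induction on `n`.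
-/

-- Integer levels, so that shifted levels such as `k - (n - r)` are not truncated.
def rankLevel (n r : ℕ) (κ : ℤ) : Set (Fin n → ℤ) := {w | Admissible n r w ∧ rho n r w = κ}

theorem sCount_eq_ncard_rankLevel (n r k : ℕ) : sCount n r k = (rankLevel n r k).ncard := rfl

theorem sum_range_add_one_eq_choose (m : ℕ) :
    ∑ x ∈ Finset.range m, ((x : ℤ) + 1) = ((m + 1).choose 2 : ℕ) := by
  induction m with
  | zero => simp
  | succ m ih =>
    rw [Finset.sum_range_succ, ih, Nat.choose_succ_succ' (m + 1), Nat.choose_one_right]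
    push_cast
    ring

theorem le_choose_two_add_one (m : ℕ) : m ≤ (m + 1).choose 2 := by
  induction m with
  | zero => simp
  | succ m ih =>
    rw [Nat.choose_succ_succ' (m + 1), Nat.choose_one_right]
    omega

theorem choose_two_add_one_succ (m : ℕ) : (m + 1 + 1).choose 2 = (m + 1).choose 2 + (m + 1) := by
  rw [Nat.choose_succ_succ' (m + 1), Nat.choose_one_right, add_comm]

theorem Rnk_eq_choose (n r : ℕ) : Rnk n r = (r + 1).choose 2 + (n - r + 1).choose 2 := by
  simp only [Rnk, Nat.choose_two_right, Nat.add_sub_cancel, mul_comm]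

theorem Rnk_succ_zero (n : ℕ) : Rnk (n + 1) 0 = Rnk n 0 + (n + 1) := by
  simp only [Rnk_eq_choose, Nat.sub_zero, choose_two_add_one_succ]
  ring

theorem sub_le_Rnk (n r : ℕ) : n - r ≤ Rnk n r :=
  (le_choose_two_add_one _).trans (Rnk_eq_choose n r ▸ Nat.le_add_left _ _)

theorem rho_eq_sum_add {n r : ℕ} (hr : r ≤ n) (w : Fin n → ℤ) :
    rho n r w = ∑ i, w i + ((n - r + 1).choose 2 : ℕ) := by
  have hsplit : rho n r w = ∑ i, w i + ∑ i : Fin n,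
      (if (i : ℕ) < r then 0 else (((i : ℕ) - r : ℕ) : ℤ) + 1) := by
    rw [← Finset.sum_add_distrib]
    refine Finset.sum_congr rfl fun i _ => ?_
    split_ifs <;> ring
  obtain ⟨m, rfl⟩ := Nat.exists_eq_add_of_le hr
  rw [hsplit, Fin.sum_univ_eq_sum_range (fun i => if i < r then 0 else ((i - r : ℕ) : ℤ) + 1),
    Finset.sum_range_add, Nat.add_sub_cancel_left, ← sum_range_add_one_eq_choose,
    Finset.sum_eq_zero fun x hx => if_pos (Finset.mem_range.1 hx)]
  simp

namespace Admissible

variable {n r : ℕ} {w : Fin n → ℤ}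

theorem le_apply (hw : Admissible n r w) (i : Fin n) : -((n - r : ℕ) : ℤ) ≤ w i := by
  rcases lt_or_ge (i : ℕ) r with h | h
  · have := (hw.1 i h).1
    omega
  · exact (hw.2.1 i h).1

theorem apply_le (hw : Admissible n r w) (i : Fin n) : w i ≤ r := by
  rcases lt_or_ge (i : ℕ) r with h | h
  · exact (hw.1 i h).2
  · have := (hw.2.1 i h).2
    omega

theorem add_val_le_of_neg (hw : Admissible n r w) {i j : Fin n} (hri : r ≤ i) (hij : i ≤ j)
    (hi : w i < 0) : w j + j ≤ w i + i := by
  suffices ∀ m (hm : m < n), (i : ℕ) ≤ m → w ⟨m, hm⟩ + m ≤ w i + i from this j j.isLt hij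
  intro m hm him
  revert hm
  induction m, him using Nat.le_induction with
  | base => simp
  | succ m hm ih =>
    intro hm1
    have ih := ih (by omega)
    have hm_neg : w ⟨m, by omega⟩ < 0 := by omega
    have := hw.2.2.2.2 ⟨m, by omega⟩ ⟨m + 1, hm1⟩ (Fin.mk_lt_mk.2 (by omega))
      (by simp only; omega) hm_neg.ne
    push_cast
    omega

theorem rho_nonneg (hw : Admissible n r w) : 0 ≤ rho n r w := by
  refine Finset.sum_nonneg fun i _ => ?_
  split_ifs with h
  · exact (hw.1 i h).1
  · rcases (hw.2.1 i (by omega)).2.lt_or_eq with hi | hi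
    · set last : Fin n := ⟨n - 1, by omega⟩
      have := hw.add_val_le_of_neg (j := last) (by omega) (Fin.le_def.2 (by simp [last]; omega)) hi
      have := hw.le_apply last
      have : (last : ℕ) = n - 1 := rfl
      omega
    · omega

end Admissible

theorem rankLevel_finite (n r : ℕ) (κ : ℤ) : (rankLevel n r κ).Finite :=
  (Set.Finite.pi' fun _ => Set.finite_Icc (-((n - r : ℕ) : ℤ)) r).subset
    fun _ ⟨hw, _⟩ i => ⟨hw.le_apply i, hw.apply_le i⟩

theorem rankLevel_eq_empty_of_neg {n r : ℕ} {κ : ℤ} (hκ : κ < 0) : rankLevel n r κ = ∅ :=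
  Set.eq_empty_of_forall_notMem fun _ ⟨hw, hρ⟩ => by linarith [hw.rho_nonneg]

def dualStr {n : ℕ} (w : Fin n → ℤ) : Fin n → ℤ := fun i => -w i.rev

theorem dualStr_dualStr {n : ℕ} (w : Fin n → ℤ) : dualStr (dualStr w) = w :=
  funext fun i => by simp only [dualStr, Fin.rev_rev, neg_neg]

theorem sum_dualStr {n : ℕ} (w : Fin n → ℤ) : ∑ i, dualStr w i = -∑ i, w i := by
  rw [← Finset.sum_neg_distrib]
  exact Fintype.sum_equiv Fin.revPerm _ _ fun _ => rfl

theorem Admissible.dualStr {n r : ℕ} {w : Fin n → ℤ} (hr : r ≤ n) (hw : Admissible n r w) :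
    Admissible n (n - r) (dualStr w) := by
  obtain ⟨hpos, hneg, hanti, hstrpos, hstrneg⟩ := hw
  refine ⟨fun i hi => ?_, fun i hi => ?_, fun i j hij => ?_, fun i j hij hj hne => ?_,
    fun i j hij hi hne => ?_⟩ <;> simp only [_root_.dualStr] at *
  · have := hneg i.rev (by rw [Fin.val_rev]; omega)
    omega
  · have := hpos i.rev (by rw [Fin.val_rev]; omega)
    omega
  · exact neg_le_neg (hanti _ _ (Fin.rev_le_rev.2 hij))
  · exact neg_lt_neg (hstrneg _ _ (Fin.rev_lt_rev.2 hij) (by rw [Fin.val_rev]; omega) (by omega))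
  · exact neg_lt_neg (hstrpos _ _ (Fin.rev_lt_rev.2 hij) (by rw [Fin.val_rev]; omega) (by omega))

theorem admissible_dualStr_iff {n r : ℕ} {w : Fin n → ℤ} (hr : r ≤ n) :
    Admissible n (n - r) (dualStr w) ↔ Admissible n r w := by
  refine ⟨fun h => ?_, Admissible.dualStr hr⟩
  simpa [Nat.sub_sub_self hr, dualStr_dualStr] using h.dualStr (Nat.sub_le n r)

theorem rho_dualStr {n r : ℕ} (hr : r ≤ n) (w : Fin n → ℤ) :
    rho n (n - r) (dualStr w) = Rnk n r - rho n r w := by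
  rw [rho_eq_sum_add (Nat.sub_le n r), rho_eq_sum_add hr, sum_dualStr, Nat.sub_sub_self hr,
    Rnk_eq_choose]
  push_cast
  ring

theorem Admissible.rho_le_Rnk {n r : ℕ} {w : Fin n → ℤ} (hr : r ≤ n) (hw : Admissible n r w) :
    rho n r w ≤ Rnk n r := by
  have := (hw.dualStr hr).rho_nonneg
  rw [rho_dualStr hr] at this
  linarith

theorem rankLevel_eq_empty_of_Rnk_lt {n r : ℕ} {κ : ℤ} (hr : r ≤ n) (hκ : Rnk n r < κ) :
    rankLevel n r κ = ∅ :=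
  Set.eq_empty_of_forall_notMem fun _ ⟨hw, hρ⟩ => by linarith [hw.rho_le_Rnk hr]

theorem ncard_rankLevel_dualStr {n r : ℕ} (hr : r ≤ n) (κ : ℤ) :
    (rankLevel n (n - r) (Rnk n r - κ)).ncard = (rankLevel n r κ).ncard := by
  have hpre : rankLevel n r κ = dualStr ⁻¹' rankLevel n (n - r) (Rnk n r - κ) := by
    ext w
    simp only [rankLevel, Set.mem_preimage, Set.mem_ofPred_eq, admissible_dualStr_iff hr,
      rho_dualStr hr]
    constructor <;> rintro ⟨h, h'⟩ <;> exact ⟨h, by omega⟩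
  rw [hpre, Set.ncard_preimage_of_injective_subset_range
    (Function.LeftInverse.injective dualStr_dualStr) fun w _ => ⟨dualStr w, dualStr_dualStr w⟩]

theorem val_succAbove_mk {n r : ℕ} (hr : r < n + 1) (i : Fin n) :
    ((⟨r, hr⟩ : Fin (n + 1)).succAbove i : ℕ) = if (i : ℕ) < r then (i : ℕ) else (i : ℕ) + 1 := by
  unfold Fin.succAbove
  split_ifs <;> simp_all [Fin.lt_def]

namespace Admissible

variable {n r : ℕ}

theorem snoc {v : Fin n → ℤ} (hr : r ≤ n) (hv : Admissible n r v) :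
    Admissible (n + 1) r (Fin.snoc v (-((n + 1 - r : ℕ) : ℤ))) := by
  have hlow : ∀ i, -((n + 1 - r : ℕ) : ℤ) < v i := fun i => by have := hv.le_apply i; omega
  obtain ⟨hpos, hneg, hanti, hstrpos, hstrneg⟩ := hv
  refine ⟨fun i hi => ?_, fun i hi => ?_, fun i j hij => ?_, fun i j hij hj hne => ?_,
    fun i j hij hi hne => ?_⟩
  · induction i using Fin.lastCases <;> simp_all
  · induction i using Fin.lastCases with
    | last => simp
    | cast i => have := hneg i (by simpa using hi); simp; omega
  all_goals induction i using Fin.lastCases <;> induction j using Fin.lastCases <;>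
    simp_all [(hlow _).le]
  all_goals exact absurd hij (not_lt.2 (Fin.le_last _))

theorem init {w : Fin (n + 1) → ℤ} (hw : Admissible (n + 1) r w) :
    Admissible n r (Fin.init w) := by
  have hlast := hw.le_apply (Fin.last n)
  obtain ⟨hpos, hneg, hanti, hstrpos, hstrneg⟩ := hw
  refine ⟨fun i hi => hpos _ hi, fun i hi => ⟨?_, (hneg i.castSucc hi).2⟩,
    fun i j hij => hanti _ _ (Fin.castSucc_le_castSucc_iff.2 hij),
    fun i j hij hj hne => hstrpos _ _ (Fin.castSucc_lt_castSucc_iff.2 hij) hj hne,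
    fun i j hij hi hne => hstrneg _ _ (Fin.castSucc_lt_castSucc_iff.2 hij) hi hne⟩
  rcases (hneg i.castSucc hi).2.lt_or_eq with hlt | heq
  · have := hstrneg _ _ (Fin.castSucc_lt_last i) hi hlt.ne
    simp only [Fin.init]
    omega
  · simp only [Fin.init, heq]
    omega

theorem insertNth_zero {v : Fin n → ℤ} (hr : r < n + 1) (hv : Admissible n r v) :
    Admissible (n + 1) r (Fin.insertNth ⟨r, hr⟩ 0 v) := by
  obtain ⟨hpos, hneg, hanti, hstrpos, hstrneg⟩ := hv
  refine ⟨fun i hi => ?_, fun i hi => ?_, fun i j hij => ?_, fun i j hij hj hne => ?_,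
    fun i j hij hi hne => ?_⟩
  all_goals obtain rfl | ⟨a, rfl⟩ := Fin.eq_self_or_eq_succAbove ⟨r, hr⟩ i
  all_goals try obtain rfl | ⟨b, rfl⟩ := Fin.eq_self_or_eq_succAbove ⟨r, hr⟩ j
  all_goals simp only [Fin.insertNth_apply_same, Fin.insertNth_apply_succAbove, Fin.le_def,
    Fin.lt_def, val_succAbove_mk] at *
  all_goals (try split_ifs at *) <;> first
    | omega
    | (have := hpos a (by omega); omega)
    | (have := hneg a (by omega); omega)
    | (have := hneg b (by omega); omega)
    | exact hanti a b (by omega)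
    | exact hstrpos a b (by omega) hj hne
    | exact hstrneg a b (by omega) (by omega) hne

theorem apply_mk_eq_zero {w : Fin (n + 1) → ℤ} (hr : r ≤ n) (hw : Admissible (n + 1) r w)
    (hlast : w (Fin.last n) ≠ -((n + 1 - r : ℕ) : ℤ)) : w ⟨r, by omega⟩ = 0 := by
  by_contra h0
  have hrange := hw.2.1 ⟨r, by omega⟩ le_rfl
  have := hw.add_val_le_of_neg (j := Fin.last n) le_rfl (Fin.le_last _)
    (lt_of_le_of_ne hrange.2 h0)
  have := hw.le_apply (Fin.last n)
  simp only [Fin.val_last] at *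
  omega

theorem removeNth {w : Fin (n + 1) → ℤ} (hr : r ≤ n) (hw : Admissible (n + 1) r w)
    (hlast : w (Fin.last n) ≠ -((n + 1 - r : ℕ) : ℤ)) :
    Admissible n r (Fin.removeNth ⟨r, by omega⟩ w) := by
  have hlow := hw.le_apply (Fin.last n)
  obtain ⟨hpos, hneg, hanti, hstrpos, hstrneg⟩ := hw
  have hval := val_succAbove_mk (n := n) (r := r) (by omega)
  refine ⟨fun i hi => ?_, fun i hi => ⟨?_, ?_⟩, fun i j hij => ?_, fun i j hij hj hne => ?_,
    fun i j hij hi hne => ?_⟩ <;> simp only [Fin.removeNth]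
  · exact hpos _ (by rw [hval, if_pos hi]; exact hi)
  · set x := (⟨r, _⟩ : Fin (n + 1)).succAbove i
    have hx : r ≤ (x : ℕ) := by rw [hval]; split_ifs <;> omega
    rcases (Fin.le_last x).lt_or_eq with hxl | hxl
    · rcases (hneg x hx).2.lt_or_eq with hneg_x | hzero
      · have := hstrneg x _ hxl hx hneg_x.ne
        omega
      · omega
    · rw [hxl]
      omega
  · exact (hneg _ (by rw [hval]; split_ifs <;> omega)).2
  · exact hanti _ _ (Fin.strictMono_succAbove _ |>.monotone hij)
  · exact hstrpos _ _ (Fin.strictMono_succAbove _ hij) (by rw [hval, if_pos hj]; exact hj) hne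
  · exact hstrneg _ _ (Fin.strictMono_succAbove _ hij) (by rw [hval]; split_ifs <;> omega) hne

end Admissible

theorem rho_snoc {n r : ℕ} (hr : r ≤ n) (v : Fin n → ℤ) :
    rho (n + 1) r (Fin.snoc v (-((n + 1 - r : ℕ) : ℤ))) = rho n r v := by
  rw [rho_eq_sum_add (by omega), rho_eq_sum_add hr, Fin.sum_snoc, Nat.sub_add_comm hr,
    choose_two_add_one_succ]
  push_cast
  ring

theorem rho_insertNth_zero {n r : ℕ} (hr : r ≤ n) (v : Fin n → ℤ) :
    rho (n + 1) r (Fin.insertNth ⟨r, by omega⟩ 0 v) = rho n r v + ((n + 1 - r : ℕ) : ℤ) := by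
  rw [rho_eq_sum_add (by omega), rho_eq_sum_add hr, Fin.sum_insertNth, Nat.sub_add_comm hr,
    choose_two_add_one_succ]
  push_cast
  ring

theorem rankLevel_succ_eq_union {n r : ℕ} (hr : r ≤ n) (κ : ℤ) :
    rankLevel (n + 1) r κ =
      (Fin.snoc · (-((n + 1 - r : ℕ) : ℤ))) '' rankLevel n r κ ∪
        Fin.insertNth ⟨r, by omega⟩ 0 '' rankLevel n r (κ - (n + 1 - r : ℕ)) := by
  ext w
  constructor
  · rintro ⟨hw, hρ⟩
    by_cases hlast : w (Fin.last n) = -((n + 1 - r : ℕ) : ℤ)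
    · have hw' : Fin.snoc (Fin.init w) (-((n + 1 - r : ℕ) : ℤ)) = w := by
        rw [← hlast, Fin.snoc_init_self]
      refine Or.inl ⟨Fin.init w, ⟨hw.init, ?_⟩, hw'⟩
      rw [← rho_snoc hr, hw', hρ]
    · have hw' : Fin.insertNth ⟨r, by omega⟩ 0 (Fin.removeNth ⟨r, by omega⟩ w) = w := by
        rw [← hw.apply_mk_eq_zero hr hlast, Fin.insertNth_self_removeNth]
      refine Or.inr ⟨Fin.removeNth ⟨r, by omega⟩ w, ⟨hw.removeNth hr hlast, ?_⟩, hw'⟩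
      have := rho_insertNth_zero hr (Fin.removeNth ⟨r, by omega⟩ w)
      rw [hw', hρ] at this
      omega
  · rintro (⟨v, ⟨hv, hρ⟩, rfl⟩ | ⟨v, ⟨hv, hρ⟩, rfl⟩)
    · exact ⟨hv.snoc hr, by rw [rho_snoc hr, hρ]⟩
    · exact ⟨hv.insertNth_zero _, by rw [rho_insertNth_zero hr, hρ]; ring⟩

theorem ncard_rankLevel_succ {n r : ℕ} (hr : r ≤ n) (κ : ℤ) :
    (rankLevel (n + 1) r κ).ncard =
      (rankLevel n r κ).ncard + (rankLevel n r (κ - (n + 1 - r : ℕ))).ncard := by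
  rw [rankLevel_succ_eq_union hr, Set.ncard_union_eq ?_ ((rankLevel_finite _ _ _).image _)
    ((rankLevel_finite _ _ _).image _),
    Set.ncard_image_of_injective _ ((Fin.snoc_injective2 (α := fun _ => ℤ)).left _),
    Set.ncard_image_of_injective _ (Fin.insertNth_right_injective _)]
  refine Set.disjoint_left.2 ?_
  rintro _ ⟨v, -, rfl⟩ ⟨u, ⟨hu, -⟩, heq⟩
  have hlast := congrFun heq (Fin.last n)
  simp only [Fin.snoc_last] at hlast
  obtain hp | ⟨a, ha⟩ := Fin.eq_self_or_eq_succAbove ⟨r, by omega⟩ (Fin.last n)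
  · rw [hp, Fin.insertNth_apply_same] at hlast
    omega
  · rw [ha, Fin.insertNth_apply_succAbove] at hlast
    have := hu.le_apply a
    omega

theorem ncard_rankLevel_zero_symm (n : ℕ) (κ : ℤ) :
    (rankLevel n 0 (Rnk n 0 - κ)).ncard = (rankLevel n 0 κ).ncard := by
  induction n generalizing κ with
  | zero => exact ncard_rankLevel_dualStr le_rfl κ
  | succ n ih =>
    have hrec := fun κ => ncard_rankLevel_succ (Nat.zero_le n) κ
    simp only [Nat.sub_zero, Nat.cast_add, Nat.cast_one] at hrec
    rw [hrec, hrec, Rnk_succ_zero, ← ih (κ - (n + 1)), ← ih κ, add_comm]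
    push_cast
    congr 3 <;> ring

theorem sCount_self_eq_sCount_zero (n k : ℕ) : sCount n n k = sCount n 0 k := by
  have := ncard_rankLevel_dualStr (Nat.zero_le n) (Rnk n 0 - k)
  rwa [Nat.sub_zero, sub_sub_cancel, ncard_rankLevel_zero_symm] at this

theorem sCount_recursion_general (n r k : ℕ) :
    (r < n →
      ((k < n - r → sCount n r k = sCount (n - 1) r k) ∧
       (n - r ≤ k → k ≤ Rnk (n - 1) r →
         sCount n r k = sCount (n - 1) r k + sCount (n - 1) r (k - (n - r))) ∧
       (Rnk (n - 1) r < k → k ≤ Rnk n r →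
         sCount n r k = sCount (n - 1) r (k - (n - r))))) ∧
    sCount n n k = sCount n 0 k := by
  refine ⟨fun hr => ?_, sCount_self_eq_sCount_zero n k⟩
  obtain ⟨m, rfl⟩ : ∃ m, n = m + 1 := ⟨n - 1, by omega⟩
  have hrec := ncard_rankLevel_succ (Nat.le_of_lt_succ hr) k
  simp only [sCount_eq_ncard_rankLevel, Nat.add_sub_cancel]
  refine ⟨fun hk => ?_, fun hk _ => ?_, fun hk _ => ?_⟩
  · have hneg : (k : ℤ) - (m + 1 - r : ℕ) < 0 := by omega
    rw [hrec, rankLevel_eq_empty_of_neg hneg, Set.ncard_empty, add_zero]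
  · rw [hrec, Nat.cast_sub hk]
  · have : m + 1 - r ≤ k := by have := sub_le_Rnk m r; omega
    rw [hrec, rankLevel_eq_empty_of_Rnk_lt (by omega) (by exact_mod_cast hk), Set.ncard_empty,
      zero_add, Nat.cast_sub this]

/-- the recursion for the rank numbers `s(n,r,k)` of `S(n,r)`. -/
theorem sCount_recursion (n r k : ℕ) (hn : 1 ≤ n) :
    (r < n →
      ((k < n - r → sCount n r k = sCount (n - 1) r k) ∧
       (n - r ≤ k → k ≤ Rnk (n - 1) r →
         sCount n r k = sCount (n - 1) r k + sCount (n - 1) r (k - (n - r))) ∧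
       (Rnk (n - 1) r < k → k ≤ Rnk n r →
         sCount n r k = sCount (n - 1) r (k - (n - r))))) ∧
    sCount n n k = sCount n 0 k :=
  sCount_recursion_general n r k
end
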